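/- arXiv:2411.15643 — 4 statements merged into one kernel-verified Lean document; each statement's English description precedes it below -/
import Mathlib

section
/- (Theorem 1, scalar form.) Let α > 0, T > 0, and set C_{α,T} = α/(e^{αT} − 1). Let ψ : ℝ → ℝ be differentiable on [0, T] and satisfy ψ'(t) + α·ψ(t) + C_{α,T}·ψ(0) ≤ 0 for all t ∈ [0, T]. Then ψ(T) ≤ 0; in particular there exists t₀ ∈ [0, T] such that ψ(t) ≤ 0 for all t ∈ [t₀, T]. -/
/-!
With `c = ψ 0 / (exp (α T) - 1)` the hypothesis reads `(ψ + c)' + α (ψ + c) ≤ 0`, so the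
integrating factor makes `t ↦ exp (α t) (ψ t + c)` nonincreasing on `[0, T]`. Comparing its
values at `T` and `0` gives `exp (α T) (ψ T + c) ≤ ψ 0 + c = c exp (α T)`, i.e. `ψ T ≤ 0`;
the choice of `C_{α,T}` is exactly what makes `ψ 0 + c = c exp (α T)`.
-/

open Real Set

theorem antitoneOn_exp_mul_mul_of_hasDerivWithinAt {f f' : ℝ → ℝ} {α a b : ℝ}
    (hf : ∀ t ∈ Icc a b, HasDerivWithinAt f (f' t) (Icc a b) t)
    (hdecay : ∀ t ∈ Icc a b, f' t + α * f t ≤ 0) :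
    AntitoneOn (fun t => exp (α * t) * f t) (Icc a b) := by
  have hderiv : ∀ t ∈ Icc a b, HasDerivWithinAt (fun t => exp (α * t) * f t)
      (exp (α * t) * (f' t + α * f t)) (Icc a b) t := fun t ht =>
    ((((hasDerivAt_id t).const_mul α).exp.hasDerivWithinAt).mul (hf t ht)).congr_deriv
      (by simp only [id, mul_one]; ring)
  refine antitoneOn_of_hasDerivWithinAt_nonpos (convex_Icc a b)
    (f' := fun t => exp (α * t) * (f' t + α * f t)) (fun t ht => (hderiv t ht).continuousWithinAt)
    (fun t ht => ?_) (fun t ht => ?_)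
  · rw [interior_Icc] at ht ⊢
    exact (hderiv t (Ioo_subset_Icc_self ht)).mono Ioo_subset_Icc_self
  · rw [interior_Icc] at ht
    exact mul_nonpos_of_nonneg_of_nonpos (exp_pos _).le (hdecay t (Ioo_subset_Icc_self ht))

/-- Theorem 1, scalar form: For α > 0, T > 0, C_{α,T} = α/(e^{αT} − 1),
if ψ is differentiable on [0,T] and ψ'(t) + α·ψ(t) + C_{α,T}·ψ(0) ≤ 0 on [0,T],
then ψ(T) ≤ 0; in particular there exists t₀ ∈ [0,T] with ψ(t) ≤ 0 on [t₀,T]. -/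
theorem stmt3 (α T : ℝ) (hα : 0 < α) (hT : 0 < T)
    (ψ ψ' : ℝ → ℝ)
    (hψ : ∀ t ∈ Set.Icc (0 : ℝ) T, HasDerivWithinAt ψ (ψ' t) (Set.Icc (0 : ℝ) T) t)
    (hcond : ∀ t ∈ Set.Icc (0 : ℝ) T,
      ψ' t + α * ψ t + (α / (Real.exp (α * T) - 1)) * ψ 0 ≤ 0) :
    ψ T ≤ 0 ∧ ∃ t₀ ∈ Set.Icc (0 : ℝ) T, ∀ t ∈ Set.Icc t₀ T, ψ t ≤ 0 := by
  set E := exp (α * T)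
  have hE : 0 < E - 1 := sub_pos.2 (one_lt_exp_iff.2 (mul_pos hα hT))
  set c := ψ 0 / (E - 1)
  have hc : c * (E - 1) = ψ 0 := div_mul_cancel₀ _ hE.ne'
  have hmono := antitoneOn_exp_mul_mul_of_hasDerivWithinAt (f := fun t => ψ t + c) (α := α)
    (fun t ht => (hψ t ht).add_const c)
    (fun t ht => by linarith [hcond t ht, show α / (E - 1) * ψ 0 = α * c by ring])
  have hT0 : E * (ψ T + c) ≤ ψ 0 + c := by
    simpa using hmono (left_mem_Icc.2 hT.le) (right_mem_Icc.2 hT.le) hT.le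
  have hψT : ψ T ≤ 0 := nonpos_of_mul_nonpos_right (by linarith) (exp_pos (α * T))
  refine ⟨hψT, T, right_mem_Icc.2 hT.le, fun t ht => ?_⟩
  rwa [le_antisymm ht.2 ht.1]
end

section
/- (Theorem 1, strict version.) Let α > 0, T > 0, and set C_{α,T} = α/(e^{αT} − 1). Let ψ : ℝ → ℝ be differentiable on [0, T] and satisfy the strict inequality ψ'(t) + α·ψ(t) + C_{α,T}·ψ(0) < 0 for all t ∈ [0, T]. Then ψ(T) < 0. -/
/-!
With `c = 1 / (exp (α T) - 1)`, the shifted function `φ = ψ + c ψ(0)` satisfies `φ' + α φ < 0`,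
so `exp (α t) φ(t)` is strictly decreasing on `[0, T]`. Comparing `t = T` with `t = 0` gives
`exp (α T) (ψ(T) + c ψ(0)) < (1 + c) ψ(0) = c exp (α T) ψ(0)`, i.e. `exp (α T) ψ(T) < 0`.
-/

open Set Real

theorem strictAntiOn_exp_mul_mul_of_deriv_add_mul_neg {s : Set ℝ} (hs : Convex ℝ s)
    {f f' : ℝ → ℝ} {α : ℝ} (hf : ∀ t ∈ s, HasDerivWithinAt f (f' t) s t)
    (hneg : ∀ t ∈ interior s, f' t + α * f t < 0) :
    StrictAntiOn (fun t => exp (α * t) * f t) s := by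
  have hderiv : ∀ t ∈ s, HasDerivWithinAt (fun t => exp (α * t) * f t)
      (exp (α * t) * (f' t + α * f t)) s t := fun t ht =>
    (((hasDerivAt_id t).const_mul α).exp.hasDerivWithinAt.mul (hf t ht)).congr_deriv
      (by simp only [id, mul_one]; ring)
  refine strictAntiOn_of_hasDerivWithinAt_neg hs
    (fun t ht => (hderiv t ht).continuousWithinAt)
    (fun t ht => (hderiv t (interior_subset ht)).mono interior_subset)
    (fun t ht => mul_neg_of_pos_of_neg (exp_pos _) (hneg t ht))

/-- Theorem 1, strict version: For α > 0, T > 0, C_{α,T} = α/(e^{αT} − 1),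
if ψ is differentiable on [0,T] and ψ'(t) + α·ψ(t) + C_{α,T}·ψ(0) < 0 on [0,T],
then ψ(T) < 0. -/
theorem stmt4 (α T : ℝ) (hα : 0 < α) (hT : 0 < T)
    (ψ ψ' : ℝ → ℝ)
    (hψ : ∀ t ∈ Set.Icc (0 : ℝ) T, HasDerivWithinAt ψ (ψ' t) (Set.Icc (0 : ℝ) T) t)
    (hcond : ∀ t ∈ Set.Icc (0 : ℝ) T,
      ψ' t + α * ψ t + (α / (Real.exp (α * T) - 1)) * ψ 0 < 0) :
    ψ T < 0 := by
  set E := exp (α * T)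
  set c := 1 / (E - 1)
  have hE : 1 < E := one_lt_exp_iff.mpr (mul_pos hα hT)
  have hc : c * (E - 1) = 1 := one_div_mul_cancel (by linarith)
  have hdecay := strictAntiOn_exp_mul_mul_of_deriv_add_mul_neg (α := α) (convex_Icc 0 T)
    (fun t ht => (hψ t ht).add_const (c * ψ 0)) fun t ht => by
      have := hcond t (interior_subset ht)
      rw [← mul_one_div] at this
      linarith
  have hdrop : E * (ψ T + c * ψ 0) < ψ 0 + c * ψ 0 := by
    simpa using hdecay (left_mem_Icc.mpr hT.le) (right_mem_Icc.mpr hT.le) hT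
  have hcE : c * E * ψ 0 = ψ 0 + c * ψ 0 := by linear_combination ψ 0 * hc
  have hscaled : E * ψ T < 0 := by linarith
  exact neg_of_mul_neg_right hscaled (by linarith)
end

section
/- (Theorem 1: boundary feasibility with a time-dependent boundary control barrier function.) Let α > 0, T > 0, and set C_{α,T} = α/(e^{αT} − 1). Let φ : ℝ × ℝ → ℝ be continuously differentiable, let Y : ℝ → ℝ be differentiable with Y(0) = U₀, and let S₀ ⊆ ℝ be a set such that for every t ∈ [0, T] the sublevel set {y ∈ ℝ : φ(t, y) ≤ 0} is contained in S₀. If for all t ∈ [0, T] it holds that ∂φ/∂y(t, Y(t))·Y'(t) + ∂φ/∂t(t, Y(t)) + α·φ(t, Y(t)) + C_{α,T}·φ(0, U₀) ≤ 0, then there exists t₀ ∈ [0, T] such that Y(t) ∈ S₀ for all t ∈ [t₀, T] (boundary feasibility of Y within S₀ over [0, T]). -/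
/-!
Along the trajectory, `ψ t := φ t (Y t)` satisfies `ψ' + α ψ + C_{α,T} ψ(0) ≤ 0` by the chain rule.
With `k := ψ(0) / (e^{αT} - 1)`, so that `α k = C_{α,T} ψ(0)`, the function `e^{αt} (ψ t + k)` is
antitone on `[0, T]`; comparing its values at `T` and `0` gives `e^{αT} ψ(T) ≤ 0`, so `Y(T)` lies
in the sublevel set at time `T`, hence in `S₀`, and `t₀ = T` works.
-/

open Real Set Function

noncomputable def finiteTimeConst (α T : ℝ) : ℝ := α / (exp (α * T) - 1)

theorem DifferentiableAt.hasDerivAt_uncurry_comp {E : Type*} [NormedAddCommGroup E] [NormedSpace ℝ E]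
    {f : ℝ → ℝ → E} {y : ℝ → ℝ} {y' t : ℝ}
    (hf : DifferentiableAt ℝ (uncurry f) (t, y t)) (hy : HasDerivAt y y' t) :
    HasDerivAt (fun s => f s (y s))
      (y' • deriv (fun x => f t x) (y t) + deriv (fun s => f s (y t)) t) t := by
  set L := fderiv ℝ (uncurry f) (t, y t)
  have hL : HasFDerivAt (uncurry f) L (t, y t) := hf.hasFDerivAt
  have hpartial_t : HasDerivAt (fun s => f s (y t)) (L (1, 0)) t :=
    hL.comp_hasDerivAt (l := uncurry f) t ((hasDerivAt_id' t).prodMk (hasDerivAt_const t (y t)))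
  have hpartial_x : HasDerivAt (fun x => f t x) (L (0, 1)) (y t) :=
    hL.comp_hasDerivAt (l := uncurry f) (y t)
      ((hasDerivAt_const (y t) t).prodMk (hasDerivAt_id' (y t)))
  have hsplit : L (1, y') = y' • L (0, 1) + L (1, 0) := by
    rw [← map_smul, ← map_add]
    simp
  rw [hpartial_t.deriv, hpartial_x.deriv, ← hsplit]
  exact hL.comp_hasDerivAt (l := uncurry f) t ((hasDerivAt_id' t).prodMk hy)

theorem antitoneOn_exp_mul_mul_add {ψ ψ' : ℝ → ℝ} {α k : ℝ} {D : Set ℝ} (hD : Convex ℝ D)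
    (hψ : ∀ t ∈ D, HasDerivAt ψ (ψ' t) t) (h : ∀ t ∈ interior D, ψ' t + α * (ψ t + k) ≤ 0) :
    AntitoneOn (fun t => exp (α * t) * (ψ t + k)) D := by
  have hderiv : ∀ t ∈ D, HasDerivAt (fun t => exp (α * t) * (ψ t + k))
      (exp (α * t) * (ψ' t + α * (ψ t + k))) t := by
    intro t ht
    exact (((hasDerivAt_id' t).const_mul α).exp.fun_mul ((hψ t ht).add_const k)).congr_deriv
      (by ring)
  apply antitoneOn_of_deriv_nonpos hD
  · exact fun t ht => (hderiv t ht).continuousAt.continuousWithinAt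
  · exact fun t ht => (hderiv t (interior_subset ht)).differentiableAt.differentiableWithinAt
  · intro t ht
    rw [(hderiv t (interior_subset ht)).deriv]
    exact mul_nonpos_of_nonneg_of_nonpos (exp_pos _).le (h t ht)

theorem nonpos_of_hasDerivAt_add_mul_add_finiteTimeConst_mul_le {ψ ψ' : ℝ → ℝ} {α T : ℝ}
    (hα : α ≠ 0) (hT : 0 < T) (hψ : ∀ t ∈ Icc 0 T, HasDerivAt ψ (ψ' t) t)
    (h : ∀ t ∈ Icc 0 T, ψ' t + α * ψ t + finiteTimeConst α T * ψ 0 ≤ 0) : ψ T ≤ 0 := by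
  have hE : exp (α * T) - 1 ≠ 0 :=
    sub_ne_zero.2 <| exp_eq_one_iff _ |>.not.2 (mul_ne_zero hα hT.ne')
  set k := ψ 0 / (exp (α * T) - 1)
  have hαk : α * k = finiteTimeConst α T * ψ 0 := by
    rw [finiteTimeConst]
    ring
  have hanti := antitoneOn_exp_mul_mul_add (α := α) (k := k) (convex_Icc 0 T) hψ fun t ht => by
    linarith [h t (interior_subset ht)]
  have hmono : exp (α * T) * (ψ T + k) ≤ exp (α * 0) * (ψ 0 + k) :=
    hanti (left_mem_Icc.2 hT.le) (right_mem_Icc.2 hT.le) hT.le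
  have hk : exp (α * T) * k = ψ 0 + k := by
    simp only [k]
    field_simp
    ring
  have : exp (α * T) * ψ T ≤ 0 := by
    rw [mul_zero, exp_zero] at hmono
    linarith
  exact nonpos_of_mul_nonpos_right this (exp_pos _)

/-- Theorem 1: boundary feasibility with a time-dependent BCBF:
For α > 0, T > 0, C_{α,T} = α/(e^{αT} − 1), φ : ℝ × ℝ → ℝ continuously
differentiable, Y : ℝ → ℝ differentiable with Y(0) = U₀, and S₀ ⊆ ℝ containing
each sublevel set {y | φ(t,y) ≤ 0}, t ∈ [0,T]: if for all t ∈ [0,T],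
∂φ/∂y(t,Y(t))·Y'(t) + ∂φ/∂t(t,Y(t)) + α·φ(t,Y(t)) + C_{α,T}·φ(0,U₀) ≤ 0,
then there is t₀ ∈ [0,T] with Y(t) ∈ S₀ for all t ∈ [t₀,T]. -/
theorem stmt5 (α T U₀ : ℝ) (hα : 0 < α) (hT : 0 < T)
    (φ : ℝ → ℝ → ℝ) (hφ : ContDiff ℝ 1 (Function.uncurry φ))
    (Y : ℝ → ℝ) (hY : Differentiable ℝ Y) (hY0 : Y 0 = U₀)
    (S₀ : Set ℝ)
    (hS : ∀ t ∈ Set.Icc (0 : ℝ) T, {y : ℝ | φ t y ≤ 0} ⊆ S₀)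
    (hcond : ∀ t ∈ Set.Icc (0 : ℝ) T,
      deriv (fun y => φ t y) (Y t) * deriv Y t
          + deriv (fun s => φ s (Y t)) t
          + α * φ t (Y t)
          + (α / (Real.exp (α * T) - 1)) * φ 0 U₀ ≤ 0) :
    ∃ t₀ ∈ Set.Icc (0 : ℝ) T, ∀ t ∈ Set.Icc t₀ T, Y t ∈ S₀ := by
  have hφ' : Differentiable ℝ (uncurry φ) := hφ.differentiable one_ne_zero
  have hψ : ∀ t ∈ Icc 0 T, HasDerivAt (fun s => φ s (Y s))
      (deriv (fun y => φ t y) (Y t) * deriv Y t + deriv (fun s => φ s (Y t)) t) t := by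
    intro t _
    rw [mul_comm, ← smul_eq_mul]
    exact (hφ' _).hasDerivAt_uncurry_comp (hY t).hasDerivAt
  have hψT : φ T (Y T) ≤ 0 :=
    nonpos_of_hasDerivAt_add_mul_add_finiteTimeConst_mul_le (ψ := fun s => φ s (Y s))
      hα.ne' hT hψ fun t ht => by
        simpa only [hY0, finiteTimeConst] using hcond t ht
  refine ⟨T, right_mem_Icc.2 hT.le, fun t ht => ?_⟩
  obtain rfl : t = T := le_antisymm ht.2 ht.1
  exact hS t (right_mem_Icc.2 hT.le) hψT
end

section
/- (Time-independent barrier special case of Theorem 1.) Let α > 0, T > 0, and set C_{α,T} = α/(e^{αT} − 1). Let φ : ℝ → ℝ be continuously differentiable, let Y : ℝ → ℝ be differentiable with Y(0) = U₀, and let S₀ ⊆ ℝ satisfy {y ∈ ℝ : φ(y) ≤ 0} ⊆ S₀. If for all t ∈ [0, T] it holds that φ'(Y(t))·Y'(t) + α·φ(Y(t)) + C_{α,T}·φ(U₀) ≤ 0, then there exists t₀ ∈ [0, T] such that Y(t) ∈ S₀ for all t ∈ [t₀, T]. -/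
/-! The weighted barrier `t ↦ e^{αt} (φ(Y t) + K)`, with `K = φ(U₀)/(e^{αT} - 1)`, is
nonincreasing on `[0, T]` by the hypothesis. Comparing its values at `0` and `T` gives
`e^{αT} φ(Y T) ≤ (1 - e^{αT}) K + φ(U₀) = 0`, so `Y T` is already in the safe set. -/

open Real Set

theorem antitoneOn_exp_mul_mul_add_of_deriv_le {h : ℝ → ℝ} (hh : Differentiable ℝ h)
    (α K a b : ℝ) (hle : ∀ t ∈ Icc a b, deriv h t + α * (h t + K) ≤ 0) :
    AntitoneOn (fun t => exp (α * t) * (h t + K)) (Icc a b) := by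
  have hderiv : ∀ t, HasDerivAt (fun t => exp (α * t) * (h t + K))
      (exp (α * t) * (deriv h t + α * (h t + K))) t := by
    intro t
    have hexp : HasDerivAt (fun t => exp (α * t)) (exp (α * t) * α) t := by
      simpa using ((hasDerivAt_id t).const_mul α).exp
    exact (hexp.mul ((hh t).hasDerivAt.add_const K)).congr_deriv (by ring)
  have hdiff : Differentiable ℝ (fun t => exp (α * t) * (h t + K)) :=
    fun t => (hderiv t).differentiableAt
  refine antitoneOn_of_deriv_nonpos (convex_Icc a b) hdiff.continuous.continuousOn
    hdiff.differentiableOn fun t ht => ?_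
  rw [(hderiv t).deriv]
  exact mul_nonpos_of_nonneg_of_nonpos (exp_pos _).le
    (hle t (interior_subset (s := Icc a b) ht))

theorem le_zero_of_deriv_add_mul_add_le {h : ℝ → ℝ} (hh : Differentiable ℝ h)
    {α T : ℝ} (hα : 0 < α) (hT : 0 < T)
    (hle : ∀ t ∈ Icc 0 T, deriv h t + α * h t + α / (exp (α * T) - 1) * h 0 ≤ 0) :
    h T ≤ 0 := by
  set E := exp (α * T)
  have hE : 0 < E - 1 := sub_pos.mpr (one_lt_exp_iff.mpr (mul_pos hα hT))
  set K := h 0 / (E - 1)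
  have hK : K * (E - 1) = h 0 := div_mul_cancel₀ _ hE.ne'
  have hanti := antitoneOn_exp_mul_mul_add_of_deriv_le hh α K 0 T fun t ht => by
    have : α / (E - 1) * h 0 = α * K := by rw [mul_div_assoc', div_mul_eq_mul_div]
    linarith [hle t ht]
  have hcompare : E * (h T + K) ≤ h 0 + K := by
    simpa [E] using hanti (left_mem_Icc.mpr hT.le) (right_mem_Icc.mpr hT.le) hT.le
  have hET : E * h T ≤ 0 := by linarith
  exact nonpos_of_mul_nonpos_right hET (exp_pos _)

/-- time-independent barrier special case of Theorem 1:
For α > 0, T > 0, C_{α,T} = α/(e^{αT} − 1), φ : ℝ → ℝ continuously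
differentiable, Y : ℝ → ℝ differentiable with Y(0) = U₀, and S₀ ⊇ {y | φ(y) ≤ 0}:
if φ'(Y(t))·Y'(t) + α·φ(Y(t)) + C_{α,T}·φ(U₀) ≤ 0 for all t ∈ [0,T], then there
is t₀ ∈ [0,T] with Y(t) ∈ S₀ for all t ∈ [t₀,T]. -/
theorem stmt6 (α T U₀ : ℝ) (hα : 0 < α) (hT : 0 < T)
    (φ : ℝ → ℝ) (hφ : ContDiff ℝ 1 φ)
    (Y : ℝ → ℝ) (hY : Differentiable ℝ Y) (hY0 : Y 0 = U₀)
    (S₀ : Set ℝ) (hS : {y : ℝ | φ y ≤ 0} ⊆ S₀)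
    (hcond : ∀ t ∈ Set.Icc (0 : ℝ) T,
      deriv φ (Y t) * deriv Y t + α * φ (Y t)
          + (α / (Real.exp (α * T) - 1)) * φ U₀ ≤ 0) :
    ∃ t₀ ∈ Set.Icc (0 : ℝ) T, ∀ t ∈ Set.Icc t₀ T, Y t ∈ S₀ := by
  have hφY : Differentiable ℝ (φ ∘ Y) := (hφ.differentiable one_ne_zero).comp hY
  have hφYT : φ (Y T) ≤ 0 := by
    refine le_zero_of_deriv_add_mul_add_le hφY hα hT fun t ht => ?_
    rw [deriv_comp t ((hφ.differentiable one_ne_zero) (Y t)) (hY t)]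
    simpa [hY0] using hcond t ht
  refine ⟨T, right_mem_Icc.mpr hT.le, fun t ht => hS ?_⟩
  rwa [le_antisymm ht.2 ht.1]
end
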